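/- arXiv:2211.11907 — 3 statements merged into one kernel-verified Lean document; each statement's English description precedes it below -/
import Mathlib

section
/- The smallest eigenvalue of the tridiagonal matrix E_n (with first diagonal entry 3, middle diagonal entries 2, last diagonal entry 1, off-diagonal entries -1) is 2 - 2·cos(π/(2n)). -/
open Matrix Real Finset

private lemma sum_if_eq_val {n : ℕ} (k : ℕ) (f : Fin n → ℝ) :
    (∑ j : Fin n, if k = (j : ℕ) then f j else 0) =
      if h : k < n then f ⟨k, h⟩ else 0 := by
  split_ifs with h
  · rw [Finset.sum_eq_single (⟨k, h⟩ : Fin n)]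
    · simp
    · intro j _ hj
      rw [if_neg]
      intro hk
      exact hj (Fin.ext hk.symm)
    · simp
  · apply Finset.sum_eq_zero
    intro j _
    rw [if_neg]
    intro hk
    exact h (hk ▸ j.isLt)

private lemma sum_if_succ_eq {n : ℕ} (k : ℕ) (f : Fin n → ℝ) :
    (∑ j : Fin n, if (j : ℕ) + 1 = k then f j else 0) =
      if h : k - 1 < n ∧ 1 ≤ k then f ⟨k - 1, h.1⟩ else 0 := by
  split_ifs with h
  · rw [Finset.sum_eq_single (⟨k - 1, h.1⟩ : Fin n)]
    · rw [if_pos]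
      simp only []
      omega
    · intro j _ hj
      rw [if_neg]
      intro hk
      apply hj
      apply Fin.ext
      simp only []
      omega
    · simp
  · apply Finset.sum_eq_zero
    intro j _
    rw [if_neg]
    intro hk
    apply h
    have := j.isLt
    omega

/-- The smallest eigenvalue of the tridiagonal matrix `E` (diagonal `(3,2,...,2,1)`,
off-diagonal entries `-1`) is `2 - 2 cos (π / (2n))`. -/
theorem stmt2 (n : ℕ) (hn : 3 ≤ n)
    (E : Matrix (Fin n) (Fin n) ℝ)
    (hE : ∀ i j, E i j =
      if i = j then (if (i:ℕ) = 0 then 3 else if (i:ℕ) = n - 1 then 1 else 2)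
      else if (i:ℕ) + 1 = (j:ℕ) ∨ (j:ℕ) + 1 = (i:ℕ) then -1 else 0) :
    IsLeast {μ : ℝ | ∃ v : Fin n → ℝ, v ≠ 0 ∧ E.mulVec v = μ • v}
      (2 - 2 * Real.cos (Real.pi / (2 * n))) := by
  have hn3R : (3:ℝ) ≤ (n:ℝ) := by exact_mod_cast hn
  have hnR : (0:ℝ) < (n:ℝ) := by linarith
  set c : ℝ := π / (4 * n) with hc
  have hcpos : 0 < c := by
    have := Real.pi_pos
    positivity
  have h4nc : 4 * (n:ℝ) * c = π := by
    rw [hc]; field_simp [hnR.ne']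
  have h2nc : 2 * (n:ℝ) * c = π / 2 := by
    rw [hc]
    field_simp
    ring
  set μ₀ : ℝ := 2 - 2 * Real.cos (Real.pi / (2 * n)) with hμ₀def
  have hμ₀ : μ₀ = 2 - 2 * Real.cos (2 * c) := by
    rw [hμ₀def]
    congr 2
    rw [hc]
    field_simp
    ring_nf
  clear_value c
  set v : Fin n → ℝ := fun i => Real.sin ((2 * (i:ℕ) + 1) * c) with hv
  have hvpos : ∀ i : Fin n, 0 < v i := by
    intro i
    apply Real.sin_pos_of_pos_of_lt_pi
    · positivity
    · rw [← h4nc]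
      have h1 : (2 * ((i:ℕ):ℝ) + 1) < 4 * (n:ℝ) := by
        have h0 : (i:ℕ) < n := i.isLt
        have h0' : ((i:ℕ):ℝ) < (n:ℝ) := by exact_mod_cast h0
        have h0'' : (0:ℝ) ≤ ((i:ℕ):ℝ) := Nat.cast_nonneg _
        linarith
      exact mul_lt_mul_of_pos_right h1 hcpos
  -- trig identities
  have L1 : ∀ a : ℝ, Real.sin ((a - 2) * c) + Real.sin ((a + 2) * c)
      = 2 * Real.cos (2 * c) * Real.sin (a * c) := by
    intro a
    rw [show (a - 2) * c = a * c - 2 * c by ring, show (a + 2) * c = a * c + 2 * c by ring,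
      Real.sin_sub, Real.sin_add]
    ring
  have L2 : Real.sin ((2 * (n:ℝ) + 1) * c) = Real.sin ((2 * (n:ℝ) - 1) * c) := by
    rw [show (2 * (n:ℝ) + 1) * c = π / 2 + c by rw [← h2nc]; ring,
        show (2 * (n:ℝ) - 1) * c = π / 2 - c by rw [← h2nc]; ring,
        Real.sin_pi_div_two_sub, Real.sin_add, Real.sin_pi_div_two, Real.cos_pi_div_two]
    ring
  -- the eigenvalue equation
  have hrow : ∀ (i : Fin n) (x : Fin n → ℝ), E.mulVec x i =
      (if (i:ℕ) = 0 then 3 else if (i:ℕ) = n - 1 then 1 else 2) * x i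
      + (if h : (i:ℕ) + 1 < n then -x ⟨(i:ℕ) + 1, h⟩ else 0)
      + (if h : (i:ℕ) - 1 < n ∧ 1 ≤ (i:ℕ) then -x ⟨(i:ℕ) - 1, h.1⟩ else 0) := by
    intro i x
    have hsplit : ∀ j : Fin n, E i j * x j =
        (if i = j then (if (i:ℕ) = 0 then 3 else if (i:ℕ) = n - 1 then 1 else 2) * x j else 0)
        + (if (i:ℕ) + 1 = (j:ℕ) then -x j else 0)
        + (if (j:ℕ) + 1 = (i:ℕ) then -x j else 0) := by
      intro j
      rw [hE]
      by_cases h1 : i = j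
      · subst h1
        have h2 : ¬((i:ℕ) + 1 = (i:ℕ)) := by omega
        rw [if_pos rfl, if_pos rfl]
        simp only [if_neg h2]
        ring
      · have hij : (i:ℕ) ≠ (j:ℕ) := fun h => h1 (Fin.ext h)
        rw [if_neg h1, if_neg h1]
        by_cases h2 : (i:ℕ) + 1 = (j:ℕ)
        · have h3 : ¬((j:ℕ) + 1 = (i:ℕ)) := by omega
          rw [if_pos (Or.inl h2), if_pos h2, if_neg h3]
          ring
        · by_cases h3 : (j:ℕ) + 1 = (i:ℕ)
          · rw [if_pos (Or.inr h3), if_neg h2, if_pos h3]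
            ring
          · rw [if_neg (by tauto), if_neg h2, if_neg h3]
            ring
    show ∑ j, E i j * x j = _
    rw [Finset.sum_congr rfl (fun j _ => hsplit j), Finset.sum_add_distrib,
      Finset.sum_add_distrib, Finset.sum_ite_eq, if_pos (Finset.mem_univ i),
      sum_if_eq_val ((i:ℕ)+1) (fun j => -x j), sum_if_succ_eq (i:ℕ) (fun j => -x j)]
  have heig : E.mulVec v = μ₀ • v := by
    funext i
    rw [hrow i v]
    show _ = μ₀ * v i
    rw [hμ₀]
    by_cases hi0 : (i:ℕ) = 0
    · rw [if_pos hi0, dif_pos (show (i:ℕ) + 1 < n by omega),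
        dif_neg (show ¬((i:ℕ) - 1 < n ∧ 1 ≤ (i:ℕ)) by omega)]
      have hc0 : ((i:ℕ):ℝ) = 0 := by rw [hi0]; norm_num
      have key := L1 1
      rw [show ((1:ℝ) - 2) * c = -(1 * c) by ring, Real.sin_neg] at key
      simp only [hv]
      push_cast
      rw [hc0]
      norm_num at key ⊢
      linarith
    · by_cases hil : (i:ℕ) = n - 1
      · rw [if_neg hi0, if_pos hil, dif_neg (show ¬((i:ℕ) + 1 < n) by omega),
          dif_pos (show (i:ℕ) - 1 < n ∧ 1 ≤ (i:ℕ) by omega)]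
        have hc1 : ((i:ℕ):ℝ) = (n:ℝ) - 1 := by
          rw [hil]
          push_cast [Nat.cast_sub (show 1 ≤ n by omega)]
          ring
        have hc2 : (((i:ℕ) - 1 : ℕ):ℝ) = (n:ℝ) - 2 := by
          rw [hil]
          have : n - 1 - 1 = n - 2 := by omega
          rw [this]
          push_cast [Nat.cast_sub (show 2 ≤ n by omega)]
          ring
        have key := L1 (2 * (n:ℝ) - 1)
        rw [show (2 * (n:ℝ) - 1 + 2) * c = (2 * (n:ℝ) + 1) * c by ring, L2] at key
        simp only [hv]
        rw [hc1, hc2]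
        ring_nf at key ⊢
        linarith
      · rw [if_neg hi0, if_neg hil, dif_pos (show (i:ℕ) + 1 < n by omega),
          dif_pos (show (i:ℕ) - 1 < n ∧ 1 ≤ (i:ℕ) by omega)]
        have hc2 : (((i:ℕ) - 1 : ℕ):ℝ) = ((i:ℕ):ℝ) - 1 := by
          push_cast [Nat.cast_sub (show 1 ≤ (i:ℕ) by omega)]
          ring
        have key := L1 (2 * ((i:ℕ):ℝ) + 1)
        simp only [hv]
        push_cast
        rw [hc2]
        ring_nf at key ⊢
        linarith
  constructor
  · exact ⟨v, fun h => absurd (congrFun h ⟨0, by omega⟩) (hvpos ⟨0, by omega⟩).ne', heig⟩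
  · rintro μ ⟨w, hw0, hw⟩
    set u : Fin n → ℝ := fun i => |w i| with hu
    have hsymm : ∀ i j, E j i = E i j := by
      intro i j
      rw [hE, hE]
      by_cases h : i = j
      · subst h; rfl
      · rw [if_neg h, if_neg (Ne.symm h)]
        by_cases h2 : (i:ℕ) + 1 = (j:ℕ) ∨ (j:ℕ) + 1 = (i:ℕ)
        · rw [if_pos (Or.symm h2), if_pos h2]
        · rw [if_neg (fun hh => h2 (Or.symm hh)), if_neg h2]
    have hAnn : ∀ i j : Fin n, 0 ≤ (if i = j then (3:ℝ) else 0) - E i j := by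
      intro i j
      by_cases h : i = j
      · subst h
        rw [if_pos rfl, hE, if_pos rfl]
        split_ifs <;> norm_num
      · rw [if_neg h, hE, if_neg h]
        split_ifs <;> norm_num
    have hrowsum : ∀ (x : Fin n → ℝ) (i : Fin n),
        (∑ j, ((if i = j then (3:ℝ) else 0) - E i j) * x j) = 3 * x i - E.mulVec x i := by
      intro x i
      have hterm : ∀ j, ((if i = j then (3:ℝ) else 0) - E i j) * x j
          = (if i = j then 3 * x j else 0) - E i j * x j := by
        intro j; split_ifs <;> ring
      rw [Finset.sum_congr rfl fun j _ => hterm j, Finset.sum_sub_distrib,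
        Finset.sum_ite_eq, if_pos (Finset.mem_univ i)]
      rfl
    have hAv : ∀ i, (∑ j, ((if i = j then (3:ℝ) else 0) - E i j) * v j) = (3 - μ₀) * v i := by
      intro i
      rw [hrowsum, heig]
      show 3 * v i - μ₀ * v i = _
      ring
    have hAu : ∀ i, (3 - μ) * u i ≤ ∑ j, ((if i = j then (3:ℝ) else 0) - E i j) * u j := by
      intro i
      have h1 : |∑ j, ((if i = j then (3:ℝ) else 0) - E i j) * w j|
          ≤ ∑ j, ((if i = j then (3:ℝ) else 0) - E i j) * u j := by
        refine (Finset.abs_sum_le_sum_abs _ _).trans (le_of_eq ?_)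
        refine Finset.sum_congr rfl fun j _ => ?_
        rw [abs_mul, abs_of_nonneg (hAnn i j)]
      have h2 : (∑ j, ((if i = j then (3:ℝ) else 0) - E i j) * w j) = (3 - μ) * w i := by
        rw [hrowsum, hw]
        show 3 * w i - μ * w i = _
        ring
      rw [h2] at h1
      calc (3 - μ) * u i ≤ |3 - μ| * |w i| :=
            mul_le_mul_of_nonneg_right (le_abs_self _) (abs_nonneg _)
        _ = |(3 - μ) * w i| := (abs_mul _ _).symm
        _ ≤ _ := h1
    obtain ⟨i₀, hi₀⟩ : ∃ i, w i ≠ 0 := by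
      by_contra h
      push_neg at h
      exact hw0 (funext fun i => h i)
    have hS : 0 < ∑ i, v i * u i :=
      Finset.sum_pos' (fun i _ => mul_nonneg (hvpos i).le (abs_nonneg _))
        ⟨i₀, Finset.mem_univ _, mul_pos (hvpos i₀) (abs_pos.mpr hi₀)⟩
    have main : (3 - μ) * (∑ i, v i * u i) ≤ (3 - μ₀) * (∑ i, v i * u i) := by
      calc (3 - μ) * (∑ i, v i * u i) = ∑ i, v i * ((3 - μ) * u i) := by
            rw [Finset.mul_sum]; exact Finset.sum_congr rfl fun i _ => by ring
        _ ≤ ∑ i, v i * (∑ j, ((if i = j then (3:ℝ) else 0) - E i j) * u j) :=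
            Finset.sum_le_sum fun i _ => mul_le_mul_of_nonneg_left (hAu i) (hvpos i).le
        _ = ∑ j, (∑ i, ((if j = i then (3:ℝ) else 0) - E j i) * v i) * u j := by
            simp_rw [Finset.mul_sum, Finset.sum_mul]
            rw [Finset.sum_comm]
            refine Finset.sum_congr rfl fun j _ => Finset.sum_congr rfl fun i _ => ?_
            rw [hsymm j i]
            have hif : (if i = j then (3:ℝ) else 0) = (if j = i then 3 else 0) := by
              by_cases h : i = j
              · rw [if_pos h, if_pos h.symm]
              · rw [if_neg h, if_neg (Ne.symm h)]
            rw [hif]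
            ring
        _ = ∑ j, ((3 - μ₀) * v j) * u j :=
            Finset.sum_congr rfl fun j _ => by rw [hAv j]
        _ = (3 - μ₀) * (∑ i, v i * u i) := by
            rw [Finset.mul_sum]; exact Finset.sum_congr rfl fun i _ => by ring
    have hle : 3 - μ ≤ 3 - μ₀ := (mul_le_mul_iff_of_pos_right hS).mp main
    linarith
end

section
/- For the integral operator T f = ∫₀^· f(s) ds mapping the space of continuous functions f on [0,1] (whose antiderivative vanishes at all points k/2^n) to their antiderivatives, the operator norm from L^∞[0,1] to L^∞[0,1] equals 2^{-n-1}. -/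
open MeasureTheory Set

private lemma clamp_neg (y : ℝ) : max (-1) (min 1 (-y)) = - max (-1) (min 1 y) := by
  rcases le_total y (-1) with h | h <;> rcases le_total y 1 with h' | h' <;>
    simp [max_def, min_def] <;> split_ifs <;> linarith

set_option maxHeartbeats 1000000 in
/-- The operator norm, from `L^∞[0,1]` to `L^∞[0,1]`, of the integral operator
`T f = ∫₀^· f` on the space of continuous functions whose antiderivative vanishes
at all dyadic points `k/2^n`, equals `2^(-n-1)`. -/
theorem stmt5 (n : ℕ) :
    sInf {C : ℝ | 0 ≤ C ∧ ∀ f : ℝ → ℝ, ContinuousOn f (Set.Icc 0 1) →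
      (∀ k : ℕ, k ≤ 2^n → (∫ s in (0:ℝ)..((k:ℝ)/2^n), f s) = 0) →
      sSup ((fun t => |∫ s in (0:ℝ)..t, f s|) '' Set.Icc (0:ℝ) 1) ≤
        C * sSup ((fun t => |f t|) '' Set.Icc (0:ℝ) 1)} = ((2:ℝ)^(n+1))⁻¹ := by
  have h2n : (0:ℝ) < 2^n := by positivity
  set t₀ : ℝ := ((2:ℝ)^(n+1))⁻¹ with ht₀
  have ht₀pos : 0 < t₀ := by positivity
  have ht₀eq : t₀ * (2 * 2^n) = 1 := by
    rw [ht₀]; rw [inv_mul_eq_div, div_eq_one_iff_eq (by positivity)]; ring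
  -- Part A : t₀ belongs to the set
  have hmem : (0:ℝ) ≤ t₀ ∧ ∀ f : ℝ → ℝ, ContinuousOn f (Set.Icc 0 1) →
      (∀ k : ℕ, k ≤ 2^n → (∫ s in (0:ℝ)..((k:ℝ)/2^n), f s) = 0) →
      sSup ((fun t => |∫ s in (0:ℝ)..t, f s|) '' Set.Icc (0:ℝ) 1) ≤
        t₀ * sSup ((fun t => |f t|) '' Set.Icc (0:ℝ) 1) := by
    refine ⟨ht₀pos.le, ?_⟩
    intro f hf hz
    have hbdd : BddAbove ((fun t => |f t|) '' Icc (0:ℝ) 1) :=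
      (isCompact_Icc.image_of_continuousOn hf.abs).bddAbove
    set M := sSup ((fun t => |f t|) '' Icc (0:ℝ) 1) with hM
    have hMnn : 0 ≤ M := Real.sSup_nonneg (by rintro x ⟨t, ht, rfl⟩; exact abs_nonneg _)
    have hfM : ∀ x ∈ Icc (0:ℝ) 1, |f x| ≤ M := fun x hx => le_csSup hbdd ⟨x, hx, rfl⟩
    apply Real.sSup_le
    · rintro x ⟨t, ⟨ht0, ht1⟩, rfl⟩
      have key : ∀ c : ℝ, c ∈ Icc (0:ℝ) 1 → (∫ s in (0:ℝ)..c, f s) = 0 → |t - c| ≤ t₀ →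
          |∫ s in (0:ℝ)..t, f s| ≤ t₀ * M := by
        intro c hc hc0 hctc
        have hi1 : IntervalIntegrable f volume 0 c :=
          (hf.mono (uIcc_subset_Icc ⟨le_rfl, zero_le_one⟩ hc)).intervalIntegrable
        have hi2 : IntervalIntegrable f volume c t :=
          (hf.mono (uIcc_subset_Icc hc ⟨ht0, ht1⟩)).intervalIntegrable
        have heq : (∫ s in (0:ℝ)..t, f s) = ∫ s in c..t, f s := by
          rw [← intervalIntegral.integral_add_adjacent_intervals hi1 hi2, hc0, zero_add]
        rw [heq]
        have hb : ‖∫ s in c..t, f s‖ ≤ M * |t - c| := by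
          apply intervalIntegral.norm_integral_le_of_norm_le_const
          intro x hx
          rw [Real.norm_eq_abs]
          exact hfM x (uIcc_subset_Icc hc ⟨ht0, ht1⟩ (uIoc_subset_uIcc hx))
        rw [Real.norm_eq_abs] at hb
        calc |∫ s in c..t, f s| ≤ M * |t - c| := hb
          _ ≤ M * t₀ := mul_le_mul_of_nonneg_left hctc hMnn
          _ = t₀ * M := mul_comm _ _
      set k := ⌊(2:ℝ)^n * t⌋₊ with hk
      have hk_le : (k:ℝ) ≤ 2^n * t := Nat.floor_le (by positivity)
      have hk_lt : (2:ℝ)^n * t < k + 1 := Nat.lt_floor_add_one _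
      have hdiv : (k:ℝ)/2^n * 2^n = k := div_mul_cancel₀ _ h2n.ne'
      have hdiv1 : ((k:ℝ)+1)/2^n * 2^n = (k:ℝ)+1 := div_mul_cancel₀ _ h2n.ne'
      have ht₀2 : t₀ * 2^n = 1/2 := by nlinarith [ht₀eq]
      by_cases hcase : 2^n * t - k ≤ 1/2
      · refine key ((k:ℝ)/2^n) ⟨by positivity, ?_⟩ ?_ ?_
        · rw [div_le_one h2n]; nlinarith
        · have : k ≤ 2^n := by
            have : (k:ℝ) ≤ ((2^n : ℕ) : ℝ) := by push_cast; nlinarith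
            exact_mod_cast this
          exact hz k this
        · rw [abs_of_nonneg (by nlinarith)]
          nlinarith
      · push_neg at hcase
        have hklt : k < 2^n := by
          have : (k:ℝ) < ((2^n : ℕ) : ℝ) := by push_cast; nlinarith
          exact_mod_cast this
        have hk1 : ((k:ℝ)+1) ≤ 2^n := by
          have : ((k+1 : ℕ) : ℝ) ≤ ((2^n : ℕ) : ℝ) := by exact_mod_cast hklt
          push_cast at this; linarith
        refine key (((k:ℝ)+1)/2^n) ⟨by positivity, by rw [div_le_one h2n]; nlinarith⟩ ?_ ?_
        · have := hz (k+1) hklt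
          convert this using 3
          push_cast; ring
        · rw [abs_sub_comm, abs_of_nonneg (by nlinarith)]
          nlinarith
    · positivity
  apply le_antisymm
  · exact csInf_le ⟨0, fun C hC => hC.1⟩ hmem
  · refine le_csInf ⟨t₀, hmem⟩ ?_
    rintro C ⟨hC0, hC⟩
    have hπ := Real.pi_pos
    have key : ∀ m : ℕ, 1 ≤ m → t₀ * (1 - 1/(m:ℝ)) ≤ C := by
      intro m hm
      have hmR : (1:ℝ) ≤ m := by exact_mod_cast hm
      have hmpos : (0:ℝ) < m := by linarith
      set ω : ℝ := 2^(n+1) * Real.pi with hω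
      have hωpos : 0 < ω := by positivity
      have hωt₀ : ω * t₀ = Real.pi := by
        rw [hω, ht₀]; field_simp
      set g : ℝ → ℝ := fun t => max (-1) (min 1 ((m:ℝ) * Real.sin (ω * t))) with hg
      have hgc : Continuous g := by fun_prop
      have hg1 : ∀ t, |g t| ≤ 1 := fun t => abs_le.2
        ⟨le_max_left _ _, max_le (by norm_num) (min_le_left _ _)⟩
      have hgz : ∀ k : ℕ, k ≤ 2^n → (∫ s in (0:ℝ)..((k:ℝ)/2^n), g s) = 0 := by
        intro k _
        set c : ℝ := (k:ℝ)/2^n with hc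
        have hrefl : ∀ x, g (c - x) = - g x := by
          intro x
          have h1 : ω * (c - x) = ((k:ℤ):ℝ) * (2*Real.pi) - ω*x := by
            rw [hω, hc]; push_cast
            field_simp
            ring
          rw [hg]; simp only
          rw [h1, Real.sin_int_mul_two_pi_sub, mul_neg]
          exact clamp_neg _
        have h1 : (∫ s in (0:ℝ)..c, g (c - s)) = ∫ s in (0:ℝ)..c, g s := by
          rw [intervalIntegral.integral_comp_sub_left g c]
          norm_num
        have h2 : (∫ s in (0:ℝ)..c, g (c - s)) = -∫ s in (0:ℝ)..c, g s := by
          simp only [hrefl]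
          exact intervalIntegral.integral_neg
        linarith [h1, h2]
      have hsupg : sSup ((fun t => |g t|) '' Icc (0:ℝ) 1) ≤ 1 :=
        Real.sSup_le (by rintro x ⟨t, _, rfl⟩; exact hg1 t) zero_le_one
      set a : ℝ := t₀ / (2*m) with ha
      have hapos : 0 < a := by positivity
      have h2a : 2 * a = t₀ / m := by rw [ha]; ring
      have haa : a ≤ t₀ - a := by
        have := div_le_self ht₀pos.le hmR
        rw [le_sub_iff_add_le]; linarith
      have hsin_nonneg : ∀ t ∈ Icc (0:ℝ) t₀, 0 ≤ Real.sin (ω*t) := by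
        rintro t ⟨h1, h2⟩
        apply Real.sin_nonneg_of_nonneg_of_le_pi (by positivity)
        rw [← hωt₀]; exact mul_le_mul_of_nonneg_left h2 hωpos.le
      have hgnn : ∀ t ∈ Icc (0:ℝ) t₀, 0 ≤ g t := by
        intro t ht
        rw [hg]; simp only
        have h1 := hsin_nonneg t ht
        have h2 : (0:ℝ) ≤ min 1 ((m:ℝ) * Real.sin (ω*t)) :=
          le_min zero_le_one (mul_nonneg hmpos.le h1)
        exact le_trans h2 (le_max_right _ _)
      have hωa : ω * a = Real.pi / (2*m) := by
        rw [ha, ← mul_div_assoc, hωt₀]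
      have hgone : ∀ t ∈ Icc a (t₀ - a), g t = 1 := by
        rintro t ⟨h1, h2⟩
        have hkey : 1/(m:ℝ) ≤ Real.sin (ω*t) := by
          rcases le_total t (t₀/2) with h | h
          · have hb1 : 0 ≤ ω*t := mul_nonneg hωpos.le (hapos.le.trans h1)
            have hb2 : ω*t ≤ Real.pi/2 := by
              calc ω*t ≤ ω*(t₀/2) := mul_le_mul_of_nonneg_left h hωpos.le
                _ = Real.pi/2 := by rw [← mul_div_assoc, hωt₀]
            calc 1/(m:ℝ) = 2/Real.pi * (ω*a) := by rw [hωa]; field_simp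
              _ ≤ 2/Real.pi * (ω*t) := by
                  apply mul_le_mul_of_nonneg_left (mul_le_mul_of_nonneg_left h1 hωpos.le)
                  positivity
              _ ≤ Real.sin (ω*t) := Real.mul_le_sin hb1 hb2
          · rw [← Real.sin_pi_sub]
            have hps : Real.pi - ω*t = ω*(t₀-t) := by rw [← hωt₀]; ring
            rw [hps]
            have hb1 : 0 ≤ ω*(t₀-t) := by
              apply mul_nonneg hωpos.le; linarith
            have hb2 : ω*(t₀-t) ≤ Real.pi/2 := by
              calc ω*(t₀-t) ≤ ω*(t₀/2) := mul_le_mul_of_nonneg_left (by linarith) hωpos.le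
                _ = Real.pi/2 := by rw [← mul_div_assoc, hωt₀]
            calc 1/(m:ℝ) = 2/Real.pi * (ω*a) := by rw [hωa]; field_simp
              _ ≤ 2/Real.pi * (ω*(t₀-t)) := by
                  apply mul_le_mul_of_nonneg_left
                  · apply mul_le_mul_of_nonneg_left _ hωpos.le
                    linarith
                  · positivity
              _ ≤ Real.sin (ω*(t₀-t)) := Real.mul_le_sin hb1 hb2
        have h1m : (1:ℝ) ≤ (m:ℝ) * Real.sin (ω*t) := by
          have := mul_le_mul_of_nonneg_left hkey hmpos.le
          rw [mul_one_div, div_self hmpos.ne'] at this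
          linarith
        rw [hg]; simp only
        rw [min_eq_left h1m, max_eq_right (by norm_num)]
      have hii : ∀ u v : ℝ, IntervalIntegrable g volume u v :=
        fun u v => hgc.intervalIntegrable u v
      have hint1 : (0:ℝ) ≤ ∫ s in (0:ℝ)..a, g s :=
        intervalIntegral.integral_nonneg hapos.le
          (fun u hu => hgnn u ⟨hu.1, hu.2.trans (by linarith)⟩)
      have hint3 : (0:ℝ) ≤ ∫ s in (t₀-a)..t₀, g s :=
        intervalIntegral.integral_nonneg (by linarith)
          (fun u hu => hgnn u ⟨by linarith [hu.1], hu.2⟩)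
      have hint2 : (∫ s in a..(t₀-a), g s) = t₀ - 2*a := by
        rw [intervalIntegral.integral_congr (g := fun _ => (1:ℝ))
          (fun u hu => hgone u (by rwa [uIcc_of_le haa] at hu))]
        simp; ring
      have hsplit : (∫ s in (0:ℝ)..t₀, g s) =
          (∫ s in (0:ℝ)..a, g s) + (∫ s in a..(t₀-a), g s) + (∫ s in (t₀-a)..t₀, g s) := by
        rw [← intervalIntegral.integral_add_adjacent_intervals (hii 0 (t₀-a)) (hii (t₀-a) t₀),
          ← intervalIntegral.integral_add_adjacent_intervals (hii 0 a) (hii a (t₀-a))]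
      have hFbig : t₀ - 2*a ≤ ∫ s in (0:ℝ)..t₀, g s := by rw [hsplit]; linarith
      have ht₀le1 : t₀ ≤ 1 := by
        have h2n1 : (1:ℝ) ≤ 2^n := one_le_pow₀ (by norm_num)
        nlinarith [ht₀eq, ht₀pos]
      have hbddF : BddAbove ((fun t => |∫ s in (0:ℝ)..t, g s|) '' Icc (0:ℝ) 1) := by
        refine ⟨1, ?_⟩
        rintro x ⟨t, ⟨h0t, ht1'⟩, rfl⟩
        have hb := intervalIntegral.norm_integral_le_of_norm_le_const (a := 0) (b := t)
          (C := 1) (f := g) (fun x _ => by rw [Real.norm_eq_abs]; exact hg1 x)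
        rw [Real.norm_eq_abs] at hb
        calc |∫ s in (0:ℝ)..t, g s| ≤ 1 * |t - 0| := hb
          _ ≤ 1 := by rw [one_mul, sub_zero, abs_of_nonneg h0t]; exact ht1'
      have hle : |∫ s in (0:ℝ)..t₀, g s| ≤
          sSup ((fun t => |∫ s in (0:ℝ)..t, g s|) '' Icc (0:ℝ) 1) :=
        le_csSup hbddF ⟨t₀, ⟨ht₀pos.le, ht₀le1⟩, rfl⟩
      have hCs := hC g hgc.continuousOn hgz
      have hfin : sSup ((fun t => |∫ s in (0:ℝ)..t, g s|) '' Icc (0:ℝ) 1) ≤ C := by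
        calc sSup ((fun t => |∫ s in (0:ℝ)..t, g s|) '' Icc (0:ℝ) 1)
            ≤ C * sSup ((fun t => |g t|) '' Icc (0:ℝ) 1) := hCs
          _ ≤ C * 1 := mul_le_mul_of_nonneg_left hsupg hC0
          _ = C := mul_one C
      have habs : (∫ s in (0:ℝ)..t₀, g s) ≤ |∫ s in (0:ℝ)..t₀, g s| := le_abs_self _
      have : t₀ * (1 - 1/(m:ℝ)) = t₀ - 2*a := by rw [h2a]; ring
      linarith
    by_contra hlt
    push_neg at hlt
    obtain ⟨m, hm⟩ := exists_nat_gt (max 1 (t₀ / (t₀ - C)))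
    have hm1R : (1:ℝ) < m := lt_of_le_of_lt (le_max_left _ _) hm
    have hm1 : 1 ≤ m := by exact_mod_cast hm1R.le
    have hmpos : (0:ℝ) < m := by linarith
    have hgt : t₀ / (t₀ - C) < m := lt_of_le_of_lt (le_max_right _ _) hm
    have hpos : 0 < t₀ - C := by linarith
    rw [div_lt_iff₀ hpos] at hgt
    have hinv : (m:ℝ) * (1/m) = 1 := by field_simp
    have := key m hm1
    nlinarith
end

section
/- If f ∈ C¹[0,1] has α-Hölder continuous derivative, then the vector z_{n+1} ∈ ℝ^{2^{n+1}} with entries z_i^{(n+1)} = 2^{3(n+1)/2} Σ_{m=n+1}^∞ 2^{-3m/2} Σ_{k=2^{m-n-1}(i-1)}^{2^{m-n-1}i - 1} θ_{m,k} satisfies ‖z_{n+1}‖_{ℓ∞} ≤ C·2^{-(n+1)(α + 1/2)} for a constant C depending only on the Hölder constant and α. -/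
open Finset Set

theorem secondDiff_bound (c α : ℝ)
    (f f' : ℝ → ℝ)
    (hf : ∀ t ∈ Set.Icc (0:ℝ) 1, HasDerivWithinAt f (f' t) (Set.Icc 0 1) t)
    (hHol : ∀ u ∈ Set.Icc (0:ℝ) 1, ∀ v ∈ Set.Icc (0:ℝ) 1, |f' u - f' v| ≤ c * |u - v| ^ α)
    (x h : ℝ) (hh : 0 < h) (hx : 0 ≤ x) (hxh : x + 2*h ≤ 1) :
    |2 * f (x+h) - f x - f (x+2*h)| ≤ c * h ^ (1+α) := by
  have hsub : Set.Icc x (x+h) ⊆ Set.Icc (0:ℝ) 1 := by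
    intro t ht; exact ⟨le_trans hx ht.1, by nlinarith [ht.2]⟩
  have hmem : ∀ t ∈ Set.Icc x (x+h), t ∈ Set.Icc (0:ℝ) 1 ∧ t + h ∈ Set.Icc (0:ℝ) 1 := by
    intro t ht
    exact ⟨hsub ht, ⟨by nlinarith [ht.1], by nlinarith [ht.2]⟩⟩
  have hg' : ∀ t ∈ Set.Icc x (x+h),
      HasDerivWithinAt (fun t => f (t+h) - f t) (f' (t+h) - f' t) (Set.Icc x (x+h)) t := by
    intro t ht
    obtain ⟨ht1, ht2⟩ := hmem t ht
    have h1 : HasDerivWithinAt (fun t => f (t+h)) (f' (t+h)) (Set.Icc x (x+h)) t := by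
      have := (hf (t+h) ht2).comp t
        ((hasDerivWithinAt_id t (Set.Icc x (x+h))).add_const h)
        (fun u hu => (hmem u hu).2)
      rw [mul_one] at this; exact this
    exact h1.sub ((hf t ht1).mono hsub)
  have hbound : ∀ t ∈ Set.Icc x (x+h), ‖f' (t+h) - f' t‖ ≤ c * h ^ α := by
    intro t ht
    obtain ⟨ht1, ht2⟩ := hmem t ht
    have := hHol (t+h) ht2 t ht1
    simpa [abs_of_pos hh] using this
  have hmvt := Convex.norm_image_sub_le_of_norm_hasDerivWithin_le hg' hbound
    (convex_Icc x (x+h)) (Set.left_mem_Icc.2 (by linarith)) (Set.right_mem_Icc.2 (by linarith))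
  have heq : f (x+h+h) - f (x+h) - (f (x+h) - f x) = -(2 * f (x+h) - f x - f (x+2*h)) := by
    rw [show x + h + h = x + 2*h by ring]; ring
  rw [Real.norm_eq_abs, Real.norm_eq_abs, heq, abs_neg,
    abs_of_pos (by linarith : (0:ℝ) < x + h - x)] at hmvt
  calc |2 * f (x+h) - f x - f (x+2*h)| ≤ c * h ^ α * (x + h - x) := hmvt
    _ = c * h ^ (1+α) := by
        rw [Real.rpow_add hh, Real.rpow_one]; ring

/-- If `f ∈ C¹[0,1]` has `α`-Hölder continuous derivative with constant `c`, then the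
vector `z_{n+1}` built from the Faber–Schauder coefficients `θ_{m,k}` of `f` satisfies
`‖z_{n+1}‖_{ℓ∞} ≤ C · 2^(-(n+1)(α+1/2))` for a constant `C` depending only on `c`, `α`. -/
theorem stmt18 (c α : ℝ) (hc : 0 ≤ c) (hα : α ∈ Set.Ioc (0:ℝ) 1) :
    ∃ C : ℝ, 0 ≤ C ∧ ∀ f f' : ℝ → ℝ,
      (∀ t ∈ Set.Icc (0:ℝ) 1, HasDerivWithinAt f (f' t) (Set.Icc 0 1) t) →
      (∀ u ∈ Set.Icc (0:ℝ) 1, ∀ v ∈ Set.Icc (0:ℝ) 1,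
        |f' u - f' v| ≤ c * |u - v| ^ α) →
      ∀ n i : ℕ, 1 ≤ i → i ≤ 2^(n+1) →
        |(2:ℝ)^(3*((n:ℝ)+1)/2) *
            ∑' j : ℕ, (2:ℝ)^(-(3*((n:ℝ)+1+(j:ℝ)))/2) *
              ∑ k ∈ Finset.Ico (2^j*(i-1)) (2^j*i),
                (2:ℝ)^(((n:ℝ)+1+(j:ℝ))/2) *
                  (2 * f ((2*(k:ℝ)+1)/2^(n+j+2)) - f ((k:ℝ)/2^(n+1+j))
                    - f (((k:ℝ)+1)/2^(n+1+j)))|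
          ≤ C * (2:ℝ)^(-((n:ℝ)+1)*(α + 1/2)) := by
  obtain ⟨hα0, hα1⟩ := hα
  set r : ℝ := (2:ℝ) ^ (-(1+α)) with hrdef
  have hr0 : 0 < r := Real.rpow_pos_of_pos two_pos _
  have hr1 : r < 1 := Real.rpow_lt_one_of_one_lt_of_neg one_lt_two (by linarith)
  refine ⟨c * r / (1 - r), div_nonneg (mul_nonneg hc hr0.le) (by linarith), ?_⟩
  intro f f' hf hHol n i hi1 hi2
  set N : ℝ := (n:ℝ) + 1 with hN
  -- geometric bound sequence
  set X : ℝ := -N - (N+1)*(1+α) with hX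
  have hb : HasSum (fun j : ℕ => (c * (2:ℝ)^X) * r^j) ((c * (2:ℝ)^X) * (1-r)⁻¹) :=
    (hasSum_geometric_of_lt_one hr0.le hr1).mul_left _
  -- per-j bound
  have haj : ∀ j : ℕ,
      ‖(2:ℝ)^(-(3*(N+(j:ℝ)))/2) *
        ∑ k ∈ Finset.Ico (2^j*(i-1)) (2^j*i),
          (2:ℝ)^((N+(j:ℝ))/2) *
            (2 * f ((2*(k:ℝ)+1)/2^(n+j+2)) - f ((k:ℝ)/2^(n+1+j))
              - f (((k:ℝ)+1)/2^(n+1+j)))‖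
      ≤ (c * (2:ℝ)^X) * r^j := by
    intro j
    set E : ℝ := (2:ℝ)^(-(N+1+(j:ℝ))*(1+α)) with hE
    have hpow2 : (0:ℝ) < (2:ℝ)^(n+1+j) := by positivity
    -- per-k bound
    have hk : ∀ k ∈ Finset.Ico (2^j*(i-1)) (2^j*i),
        |2 * f ((2*(k:ℝ)+1)/2^(n+j+2)) - f ((k:ℝ)/2^(n+1+j))
          - f (((k:ℝ)+1)/2^(n+1+j))| ≤ c * E := by
      intro k hkmem
      rw [Finset.mem_Ico] at hkmem
      have hklt : (k:ℕ) + 1 ≤ 2^(n+1+j) := by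
        calc k + 1 ≤ 2^j * i := hkmem.2
          _ ≤ 2^j * 2^(n+1) := Nat.mul_le_mul_left _ hi2
          _ = 2^(n+1+j) := by rw [← pow_add]; ring_nf
      set x : ℝ := (k:ℝ)/2^(n+1+j) with hxdef
      set h : ℝ := ((2:ℝ)^(n+j+2))⁻¹ with hhdef
      have hh : 0 < h := by positivity
      have hpoweq : (2:ℝ)^(n+j+2) = (2:ℝ)^(n+1+j) * 2 := by
        rw [show n+j+2 = (n+1+j)+1 from by omega, pow_succ]
      have hx1 : x + h = (2*(k:ℝ)+1)/2^(n+j+2) := by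
        rw [hxdef, hhdef, hpoweq]; field_simp
      have hx2 : x + 2*h = ((k:ℝ)+1)/2^(n+1+j) := by
        rw [hxdef, hhdef, hpoweq]; field_simp
      have hx0 : 0 ≤ x := by positivity
      have hxle : x + 2*h ≤ 1 := by
        rw [hx2, div_le_one hpow2]
        have := (Nat.cast_le (α := ℝ)).2 hklt
        push_cast at this ⊢
        linarith
      have hbd := secondDiff_bound c α f f' hf hHol x h hh hx0 hxle
      rw [hx1, hx2] at hbd
      refine hbd.trans (le_of_eq ?_)
      congr 1
      rw [hhdef, hE]
      rw [show ((2:ℝ)^(n+j+2))⁻¹ = (2:ℝ)^(-(((n+j+2:ℕ)):ℝ)) by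
        rw [Real.rpow_neg (by norm_num), Real.rpow_natCast]]
      rw [← Real.rpow_natCast 2 (n+j+2)] at *
      rw [← Real.rpow_mul (by norm_num)]
      · congr 1
        push_cast [hN]
        ring
    -- card of the interval
    have hcard : (Finset.Ico (2^j*(i-1)) (2^j*i)).card = 2^j := by
      rw [Nat.card_Ico, ← Nat.mul_sub, show i - (i-1) = 1 from by omega, mul_one]
    have hE0 : 0 ≤ E := le_of_lt (Real.rpow_pos_of_pos two_pos _)
    have hterm : ∀ k ∈ Finset.Ico (2^j*(i-1)) (2^j*i),
        |(2:ℝ)^((N+(j:ℝ))/2) *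
            (2 * f ((2*(k:ℝ)+1)/2^(n+j+2)) - f ((k:ℝ)/2^(n+1+j))
              - f (((k:ℝ)+1)/2^(n+1+j)))| ≤ (2:ℝ)^((N+(j:ℝ))/2) * (c * E) := by
      intro k hkmem
      rw [abs_mul, abs_of_pos (Real.rpow_pos_of_pos two_pos _)]
      exact mul_le_mul_of_nonneg_left (hk k hkmem) (le_of_lt (Real.rpow_pos_of_pos two_pos _))
    have hsum : |∑ k ∈ Finset.Ico (2^j*(i-1)) (2^j*i),
          (2:ℝ)^((N+(j:ℝ))/2) *
            (2 * f ((2*(k:ℝ)+1)/2^(n+j+2)) - f ((k:ℝ)/2^(n+1+j))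
              - f (((k:ℝ)+1)/2^(n+1+j)))|
        ≤ (2^j : ℝ) * ((2:ℝ)^((N+(j:ℝ))/2) * (c * E)) := by
      calc _ ≤ ∑ k ∈ Finset.Ico (2^j*(i-1)) (2^j*i),
            |(2:ℝ)^((N+(j:ℝ))/2) *
              (2 * f ((2*(k:ℝ)+1)/2^(n+j+2)) - f ((k:ℝ)/2^(n+1+j))
                - f (((k:ℝ)+1)/2^(n+1+j)))| := Finset.abs_sum_le_sum_abs _ _
        _ ≤ (Finset.Ico (2^j*(i-1)) (2^j*i)).card •
              ((2:ℝ)^((N+(j:ℝ))/2) * (c * E)) := Finset.sum_le_card_nsmul _ _ _ hterm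
        _ = (2^j : ℝ) * ((2:ℝ)^((N+(j:ℝ))/2) * (c * E)) := by
              rw [hcard, nsmul_eq_mul]; push_cast; ring
    rw [Real.norm_eq_abs, abs_mul, abs_of_pos (Real.rpow_pos_of_pos two_pos _)]
    calc (2:ℝ)^(-(3*(N+(j:ℝ)))/2) * |_| ≤
          (2:ℝ)^(-(3*(N+(j:ℝ)))/2) * ((2^j : ℝ) * ((2:ℝ)^((N+(j:ℝ))/2) * (c * E))) :=
            mul_le_mul_of_nonneg_left hsum (le_of_lt (Real.rpow_pos_of_pos two_pos _))
      _ = (c * (2:ℝ)^X) * r^j := by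
          have merge : ∀ a b : ℝ, (2:ℝ)^a * (2:ℝ)^b = (2:ℝ)^(a+b) :=
            fun a b => (Real.rpow_add two_pos a b).symm
          have h2j : (2:ℝ)^(j:ℕ) = (2:ℝ)^((j:ℝ)) := (Real.rpow_natCast 2 j).symm
          have hrj : r^j = (2:ℝ)^(-(1+α)*(j:ℝ)) := by
            rw [hrdef, ← Real.rpow_natCast ((2:ℝ)^(-(1+α))) j,
              ← Real.rpow_mul (by norm_num : (0:ℝ) ≤ 2)]
          rw [hE, h2j, hrj]
          calc (2:ℝ)^(-(3*(N+(j:ℝ)))/2) * ((2:ℝ)^((j:ℝ)) *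
                ((2:ℝ)^((N+(j:ℝ))/2) * (c * (2:ℝ)^(-(N+1+(j:ℝ))*(1+α)))))
              = c * ((2:ℝ)^(-(3*(N+(j:ℝ)))/2) * (2:ℝ)^((j:ℝ)) * (2:ℝ)^((N+(j:ℝ))/2) *
                  (2:ℝ)^(-(N+1+(j:ℝ))*(1+α))) := by ring
            _ = c * (2:ℝ)^(-(3*(N+(j:ℝ)))/2 + (j:ℝ) + (N+(j:ℝ))/2 + -(N+1+(j:ℝ))*(1+α)) := by
                rw [merge, merge, merge]
            _ = c * (2:ℝ)^(X + -(1+α)*(j:ℝ)) := by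
                congr 1; rw [hX]; ring
            _ = c * (2:ℝ)^X * (2:ℝ)^(-(1+α)*(j:ℝ)) := by
                rw [mul_assoc, ← merge]
  -- conclude
  rw [abs_mul, abs_of_pos (Real.rpow_pos_of_pos two_pos _)]
  have htsum : |∑' j : ℕ, (2:ℝ)^(-(3*(N+(j:ℝ)))/2) *
      ∑ k ∈ Finset.Ico (2^j*(i-1)) (2^j*i),
        (2:ℝ)^((N+(j:ℝ))/2) *
          (2 * f ((2*(k:ℝ)+1)/2^(n+j+2)) - f ((k:ℝ)/2^(n+1+j))
            - f (((k:ℝ)+1)/2^(n+1+j)))| ≤ (c * (2:ℝ)^X) * (1-r)⁻¹ := by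
    rw [← Real.norm_eq_abs]
    exact tsum_of_norm_bounded hb haj
  calc (2:ℝ)^(3*N/2) * |_| ≤ (2:ℝ)^(3*N/2) * ((c * (2:ℝ)^X) * (1-r)⁻¹) :=
        mul_le_mul_of_nonneg_left htsum (le_of_lt (Real.rpow_pos_of_pos two_pos _))
    _ = c * r / (1 - r) * (2:ℝ)^(-N*(α+1/2)) := by
        have merge : ∀ a b : ℝ, (2:ℝ)^a * (2:ℝ)^b = (2:ℝ)^(a+b) :=
          fun a b => (Real.rpow_add two_pos a b).symm
        have e1 : (2:ℝ)^(3*N/2) * (2:ℝ)^X = r * (2:ℝ)^(-N*(α+1/2)) := by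
          rw [hrdef, merge, merge]
          congr 1; rw [hX]; ring
        rw [div_eq_mul_inv]
        calc (2:ℝ)^(3*N/2) * ((c * (2:ℝ)^X) * (1-r)⁻¹)
            = c * (1-r)⁻¹ * ((2:ℝ)^(3*N/2) * (2:ℝ)^X) := by ring
          _ = c * (1-r)⁻¹ * (r * (2:ℝ)^(-N*(α+1/2))) := by rw [e1]
          _ = c * r * (1-r)⁻¹ * (2:ℝ)^(-N*(α+1/2)) := by ring
end
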